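/- arXiv:1706.01930 — 6 statements merged into one kernel-verified Lean document; each statement's English description precedes it below -/
import Mathlib

section
/- For all real x and all p with 1 ≤ p ≤ 2, one has 2|x-1|^p - |x|^p + 1 ≥ p(1-x). -/
/-!
Put `u = x - 1`. For `x ≥ 0`, i.e. `u ≥ -1`, the inequality follows from the bound
`(1 + u) ^ p ≤ 1 + p u + |u| ^ p`. Its defect vanishes at `u = 0`, and its derivative, up to the
factor `p`, is `1 + u ^ (p - 1) - (1 + u) ^ (p - 1)` for `u ≥ 0` and
`(1 - t) ^ (p - 1) + t ^ (p - 1) - 1` for `u = -t ≤ 0`; both are nonnegative because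
`s ↦ s ^ (p - 1)` is subadditive for `p - 1 ≤ 1`. For `x ≤ 0`, Bernoulli's inequality
`|x - 1| ^ p ≥ 1 - p x` together with `|x| ≤ |x - 1|` suffices.
-/

open Real Set

lemma one_add_rpow_le_of_nonneg {p u : ℝ} (hp1 : 1 ≤ p) (hp2 : p ≤ 2) (hu : 0 ≤ u) :
    (1 + u) ^ p ≤ 1 + p * u + u ^ p := by
  let f : ℝ → ℝ := fun u => 1 + p * u + u ^ p - (1 + u) ^ p
  have hf : ∀ u, HasDerivAt f (p * (1 + u ^ (p - 1) - (1 + u) ^ (p - 1))) u := fun u =>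
    (((((hasDerivAt_id u).const_mul p).const_add 1).add
      (hasDerivAt_rpow_const (Or.inr hp1))).sub
      (((hasDerivAt_id u).const_add 1).rpow_const (Or.inr hp1))).congr_deriv
      (by simp only [id]; ring)
  have hmono : MonotoneOn f (Ici 0) := by
    refine monotoneOn_of_hasDerivWithinAt_nonneg (convex_Ici 0)
      (fun u _ => (hf u).continuousAt.continuousWithinAt) (fun u _ => (hf u).hasDerivWithinAt)
      fun u hu => ?_
    rw [interior_Ici] at hu
    have hsub := rpow_add_le_add_rpow zero_le_one hu.out.le (sub_nonneg.2 hp1) (by linarith)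
    rw [one_rpow] at hsub
    exact mul_nonneg (by linarith) (sub_nonneg.2 hsub)
  have h := hmono self_mem_Ici hu hu
  simp only [f, mul_zero, add_zero, zero_rpow (by linarith : p ≠ 0), one_rpow, sub_self] at h
  linarith

lemma one_sub_rpow_le {p t : ℝ} (hp1 : 1 ≤ p) (hp2 : p ≤ 2) (ht0 : 0 ≤ t) (ht1 : t ≤ 1) :
    (1 - t) ^ p ≤ 1 - p * t + t ^ p := by
  let f : ℝ → ℝ := fun t => 1 - p * t + t ^ p - (1 - t) ^ p
  have hf : ∀ t, HasDerivAt f (p * ((1 - t) ^ (p - 1) + t ^ (p - 1) - 1)) t := fun t =>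
    (((((hasDerivAt_id t).const_mul p).const_sub 1).add
      (hasDerivAt_rpow_const (Or.inr hp1))).sub
      (((hasDerivAt_id t).const_sub 1).rpow_const (Or.inr hp1))).congr_deriv
      (by simp only [id]; ring)
  have hmono : MonotoneOn f (Icc 0 1) := by
    refine monotoneOn_of_hasDerivWithinAt_nonneg (convex_Icc 0 1)
      (fun t _ => (hf t).continuousAt.continuousWithinAt) (fun t _ => (hf t).hasDerivWithinAt)
      fun t ht => ?_
    rw [interior_Icc] at ht
    have hsub := rpow_add_le_add_rpow (sub_nonneg.2 ht.2.le) ht.1.le (sub_nonneg.2 hp1)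
      (by linarith)
    rw [sub_add_cancel, one_rpow] at hsub
    exact mul_nonneg (by linarith) (sub_nonneg.2 hsub)
  have h := hmono (left_mem_Icc.2 zero_le_one) ⟨ht0, ht1⟩ ht0
  simp only [f, mul_zero, sub_zero, zero_rpow (by linarith : p ≠ 0), one_rpow, add_zero,
    sub_self] at h
  linarith

lemma one_add_rpow_le_one_add_mul_add_abs_rpow {p u : ℝ} (hp1 : 1 ≤ p) (hp2 : p ≤ 2)
    (hu : -1 ≤ u) : (1 + u) ^ p ≤ 1 + p * u + |u| ^ p := by
  rcases le_total 0 u with hu0 | hu0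
  · rw [abs_of_nonneg hu0]
    exact one_add_rpow_le_of_nonneg hp1 hp2 hu0
  · rw [abs_of_nonpos hu0]
    simpa only [sub_neg_eq_add, mul_neg] using
      one_sub_rpow_le hp1 hp2 (neg_nonneg.2 hu0) (by linarith)

theorem stmt0 (x p : ℝ) (hp1 : 1 ≤ p) (hp2 : p ≤ 2) :
    2 * |x - 1| ^ p - |x| ^ p + 1 ≥ p * (1 - x) := by
  rcases le_or_gt x 0 with hx | hx
  · have habs : |x - 1| = 1 + -x := by rw [abs_of_nonpos (by linarith)]; ring
    have hbernoulli : 1 + p * -x ≤ |x - 1| ^ p := by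
      rw [habs]
      exact one_add_mul_self_le_rpow_one_add (by linarith) hp1
    have hpow_le : |x| ^ p ≤ |x - 1| ^ p :=
      rpow_le_rpow (abs_nonneg x) (by rw [habs, abs_of_nonpos hx]; linarith) (by linarith)
    linarith
  · have hbound := one_add_rpow_le_one_add_mul_add_abs_rpow hp1 hp2 (u := x - 1) (by linarith)
    rw [add_sub_cancel] at hbound
    rw [abs_of_pos hx]
    linarith [rpow_nonneg (abs_nonneg (x - 1)) p]
end

section
/- For all real p with 1 < p < 2, one has 2^(2 - 2/p) > p(p-1). -/
/-!
Write `2 ^ (2 - 2/p) = 2 * 2 ^ (1 - 2/p)` and bound the second factor below by its tangent line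
`1 + (1 - 2/p) log 2`. The difference between this lower bound and `p (p - 1)` factors as
`(2 - p) (p² + p - 2 log 2) / p`, which is positive because `p² + p > 2 > 2 log 2`.
-/

open Real

theorem one_add_mul_log_le_rpow {b : ℝ} (hb : 0 < b) (x : ℝ) : 1 + x * log b ≤ b ^ x := by
  rw [rpow_def_of_pos hb, mul_comm x]
  exact add_one_le_exp _ |>.trans_eq' (add_comm _ _)

theorem stmt3 (p : ℝ) (hp1 : 1 < p) (hp2 : p < 2) :
    (2 : ℝ) ^ (2 - 2 / p) > p * (p - 1) := by
  have hp0 : 0 < p := by linarith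
  have hlog : log 2 < 1 := by linarith [log_lt_sub_one_of_pos two_pos (by norm_num)]
  have htangent : 2 * (1 + (1 - 2 / p) * log 2) ≤ (2 : ℝ) ^ (2 - 2 / p) :=
    calc 2 * (1 + (1 - 2 / p) * log 2) ≤ 2 * (2 : ℝ) ^ (1 - 2 / p) := by
          gcongr; exact one_add_mul_log_le_rpow two_pos _
      _ = (2 : ℝ) ^ (2 - 2 / p) := by
          rw [show 2 - 2 / p = 1 + (1 - 2 / p) by ring, rpow_add two_pos, rpow_one]
  have hfactor : 2 * (1 + (1 - 2 / p) * log 2) - p * (p - 1)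
      = (2 - p) * (p ^ 2 + p - 2 * log 2) / p := by
    field_simp
    ring
  have hpos : 0 < (2 - p) * (p ^ 2 + p - 2 * log 2) / p :=
    div_pos (mul_pos (by linarith) (by nlinarith)) hp0
  linarith
end

section
/- For all real x, y ≥ 0, a, b: writing M(x,y) = Re((x+iy)^(3/2)) = min over q ≤ 0 of sup over p ≥ 0 of (xp + qy - (4/27)(p³ - 3pq²)), one has 2M(x,y) ≥ M(x+a, √(a²+(y+b)²)) + M(x-a, √(a²+(y-b)²)). -/
noncomputable def M (x y : ℝ) : ℝ := (((x : ℂ) + (y : ℂ) * Complex.I) ^ ((3 : ℂ) / 2)).re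

/-!
For `y ≥ 0` the principal square root of `x + y i` is `S + T i` with `S = √((r + x)/2)`,
`T = √((r - x)/2)`, `r = |x + y i|`, so `M x y = S³ - 3 S T² = (2x - r) S` depends on `y` only
through `w = y²`; write `Msq x w` for this. The points `(x ± τa, (τa)² + (y ± τb)²)`, `τ ∈ [0, 1]`,
join `(x, y²)` (twice) to the two points on the right-hand side. Since `∂ᵤ Msq = 3S/2` and
`∂_w Msq = -3/(8S)`, the derivative of the sum of the two values is, after clearing denominators,
minus a sum of squares minus the Cauchy–Schwarz defect `√((α² + p²)(α² + q²)) - (α² + pq)`, where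
`α = τa`, `p = y + τb`, `q = y - τb`. When `a = 0` the path may run through the branch point
`w = 0`, and this case follows by continuity in `a`.
-/

open Real

namespace Complex

lemma sq_cpow_three_halves {w : ℂ} (hlt : -(π / 2) < w.arg) (hle : w.arg ≤ π / 2) :
    (w ^ 2) ^ ((3 : ℂ) / 2) = w ^ 3 := by
  rw [div_eq_mul_inv, show (3 : ℂ) = ((3 : ℕ) : ℂ) by norm_num, cpow_nat_mul,
    pow_cpow_ofNat_inv hlt hle]

end Complex

noncomputable def reSqrt (u w : ℝ) : ℝ := √((√(u ^ 2 + w) + u) / 2)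

noncomputable def imSqrt (u w : ℝ) : ℝ := √((√(u ^ 2 + w) - u) / 2)

noncomputable def Msq (u w : ℝ) : ℝ := (2 * u - √(u ^ 2 + w)) * reSqrt u w

section SqrtCoordinates

variable {u w : ℝ}

lemma abs_le_sqrt_sq_add (hw : 0 ≤ w) : |u| ≤ √(u ^ 2 + w) :=
  abs_le_sqrt (by linarith)

lemma reSqrt_sq (hw : 0 ≤ w) : reSqrt u w ^ 2 = (√(u ^ 2 + w) + u) / 2 :=
  sq_sqrt (by linarith [neg_abs_le u, abs_le_sqrt_sq_add (u := u) hw])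

lemma imSqrt_sq (hw : 0 ≤ w) : imSqrt u w ^ 2 = (√(u ^ 2 + w) - u) / 2 :=
  sq_sqrt (by linarith [le_abs_self u, abs_le_sqrt_sq_add (u := u) hw])

lemma reSqrt_sq_sub_imSqrt_sq (hw : 0 ≤ w) : reSqrt u w ^ 2 - imSqrt u w ^ 2 = u := by
  rw [reSqrt_sq hw, imSqrt_sq hw]; ring

lemma four_mul_reSqrt_sq_mul_imSqrt_sq (hw : 0 ≤ w) :
    4 * reSqrt u w ^ 2 * imSqrt u w ^ 2 = w := by
  rw [reSqrt_sq hw, imSqrt_sq hw]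
  linear_combination sq_sqrt (by positivity : 0 ≤ u ^ 2 + w)

lemma reSqrt_pos (hw : 0 < w) : 0 < reSqrt u w :=
  sqrt_pos.2 <| by
    have : |u| < √(u ^ 2 + w) := abs_lt_of_sq_lt_sq ?_ (sqrt_nonneg _)
    · linarith [neg_abs_le u]
    · rw [sq_sqrt (by positivity)]; linarith

lemma Msq_eq_reSqrt_pow_three_sub (hw : 0 ≤ w) :
    Msq u w = reSqrt u w ^ 3 - 3 * reSqrt u w * imSqrt u w ^ 2 := by
  rw [Msq]
  linear_combination -reSqrt u w * reSqrt_sq (u := u) hw + 3 * reSqrt u w * imSqrt_sq (u := u) hw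

end SqrtCoordinates

lemma M_eq_Msq (x : ℝ) {y : ℝ} (hy : 0 ≤ y) : M x y = Msq x (y ^ 2) := by
  set S := reSqrt x (y ^ 2)
  set T := imSqrt x (y ^ 2)
  have hS : 0 ≤ S := sqrt_nonneg _
  have hT : 0 ≤ T := sqrt_nonneg _
  have hy2 : 0 ≤ y ^ 2 := sq_nonneg y
  have hST : 2 * S * T = y := by
    refine (sq_eq_sq₀ (by positivity) hy).1 ?_
    linear_combination four_mul_reSqrt_sq_mul_imSqrt_sq (u := x) hy2
  have hsq : ((S : ℂ) + T * Complex.I) ^ 2 = x + y * Complex.I := by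
    have hx : S ^ 2 - T ^ 2 = x := reSqrt_sq_sub_imSqrt_sq hy2
    rw [← hx, ← hST]
    push_cast
    linear_combination (T : ℂ) ^ 2 * Complex.I_sq
  have hcube : ((S : ℂ) + T * Complex.I) ^ 3 = ((S ^ 3 - 3 * S * T ^ 2 : ℝ) : ℂ)
      + ((3 * S ^ 2 * T - T ^ 3 : ℝ) : ℂ) * Complex.I := by
    push_cast
    linear_combination (3 * (S : ℂ) * T ^ 2 + T ^ 3 * Complex.I) * Complex.I_sq
  have harg_nonneg : 0 ≤ ((S : ℂ) + T * Complex.I).arg := Complex.arg_nonneg_iff.2 (by simpa)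
  have harg_le : ((S : ℂ) + T * Complex.I).arg ≤ π / 2 :=
    Complex.arg_le_pi_div_two_iff.2 (Or.inl (by simpa))
  rw [M, ← hsq, Complex.sq_cpow_three_halves (by linarith [pi_pos, harg_nonneg]) harg_le, hcube,
    Msq_eq_reSqrt_pow_three_sub hy2, Complex.add_re, Complex.ofReal_re, Complex.re_ofReal_mul, Complex.I_re, mul_zero, add_zero]

lemma HasDerivAt.Msq {c e : ℝ → ℝ} {c' e' τ : ℝ} (hc : HasDerivAt c c' τ)
    (he : HasDerivAt e e' τ) (hw : 0 < e τ) :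
    HasDerivAt (fun σ => Msq (c σ) (e σ))
      (3 / 2 * (c' * reSqrt (c τ) (e τ) - e' / (4 * reSqrt (c τ) (e τ)))) τ := by
  set r := √(c τ ^ 2 + e τ)
  set S := reSqrt (c τ) (e τ)
  have hS : 0 < S := reSqrt_pos hw
  have hS2 : S ^ 2 = (r + c τ) / 2 := reSqrt_sq hw.le
  have hr : 0 < r := sqrt_pos.2 (add_pos_of_nonneg_of_pos (sq_nonneg _) hw)
  have hr' : HasDerivAt (fun σ => √(c σ ^ 2 + e σ)) ((2 * c τ * c' + e') / (2 * r)) τ := by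
    have := (hc.pow 2).add he
    simp only [Nat.cast_ofNat, pow_one, Nat.add_one_sub_one] at this
    exact this.sqrt (add_pos_of_nonneg_of_pos (sq_nonneg _) hw).ne'
  have hq : HasDerivAt (fun σ => (√(c σ ^ 2 + e σ) + c σ) / 2)
      (((2 * c τ * c' + e') / (2 * r) + c') / 2) τ := (hr'.add hc).div_const 2
  have hS' : HasDerivAt (fun σ => reSqrt (c σ) (e σ))
      (((2 * c τ * c' + e') / (2 * r) + c') / 2 / (2 * S)) τ :=
    hq.sqrt (hS2 ▸ pow_ne_zero 2 hS.ne')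
  have hfactor : HasDerivAt (fun σ => 2 * c σ - √(c σ ^ 2 + e σ))
      (2 * c' - (2 * c τ * c' + e') / (2 * r)) τ := (hc.const_mul 2).sub hr'
  refine (hfactor.mul hS').congr_deriv ?_
  field_simp
  linear_combination 16 * (r * c' - 2 * c τ * c' - e') * hS2

lemma sq_add_mul_le_of_sq_eq {α p q X : ℝ} (hX : 0 ≤ X)
    (hX2 : X ^ 2 = (α ^ 2 + p ^ 2) * (α ^ 2 + q ^ 2)) : α ^ 2 + p * q ≤ X :=
  (le_abs_self _).trans <| abs_le_of_sq_le_sq (by nlinarith [sq_nonneg (α * (p - q))]) hX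

lemma four_mul_mul_sub_le {S₁ S₂ T₁ T₂ α : ℝ} (hS₁ : 0 ≤ S₁) (hS₂ : 0 ≤ S₂) (hS : 0 < S₁ + S₂)
    (hα : S₁ ^ 2 - T₁ ^ 2 - (S₂ ^ 2 - T₂ ^ 2) = 2 * α) :
    4 * α * S₁ * S₂ * (S₁ - S₂) ≤
      2 * α ^ 2 * (S₁ + S₂) + 4 * S₁ * S₂ * (T₁ - T₂) * (S₁ * T₁ - S₂ * T₂) := by
  refine le_of_sub_nonneg (nonneg_of_mul_nonneg_right (a := S₁ + S₂) ?_ hS)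
  have hsos : (S₁ + S₂) * (2 * α ^ 2 * (S₁ + S₂) + 4 * S₁ * S₂ * (T₁ - T₂) * (S₁ * T₁ - S₂ * T₂)
      - 4 * α * S₁ * S₂ * (S₁ - S₂))
      = 2 * (((S₁ + S₂) / 2 * (S₁ - S₂) ^ 2 - (T₁ + T₂) / 2 * (T₁ - T₂) * (S₁ - S₂)) ^ 2
        + (T₁ - T₂) ^ 2 * (((T₁ + T₂) / 2) ^ 2 + ((S₁ + S₂) / 2) ^ 2) * (4 * S₁ * S₂)) := by
    rw [show α = (S₁ ^ 2 - T₁ ^ 2 - (S₂ ^ 2 - T₂ ^ 2)) / 2 by linarith]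
    ring
  rw [hsos]
  positivity

/-- With `Sⱼ + Tⱼ i` the square roots of the two moving points, `α = τa`, `p = y + τb` and
`q = y - τb`, this is `τ` times the derivative of `pathSum` at `τ`, cleared of denominators. -/
lemma slope_inequality {S₁ S₂ T₁ T₂ α p q : ℝ} (hS₁ : 0 < S₁) (hS₂ : 0 < S₂) (hT₁ : 0 ≤ T₁)
    (hT₂ : 0 ≤ T₂) (hα : S₁ ^ 2 - T₁ ^ 2 - (S₂ ^ 2 - T₂ ^ 2) = 2 * α)
    (hp : 4 * S₁ ^ 2 * T₁ ^ 2 = α ^ 2 + p ^ 2) (hq : 4 * S₂ ^ 2 * T₂ ^ 2 = α ^ 2 + q ^ 2) :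
    4 * α * S₁ * S₂ * (S₁ - S₂) ≤
      (2 * α ^ 2 + p * (p - q)) * S₂ + (2 * α ^ 2 - q * (p - q)) * S₁ := by
  have hcs : α ^ 2 + p * q ≤ 4 * S₁ * T₁ * S₂ * T₂ :=
    sq_add_mul_le_of_sq_eq (by positivity) (by rw [← hp, ← hq]; ring)
  have hsos := four_mul_mul_sub_le hS₁.le hS₂.le (add_pos hS₁ hS₂) hα
  nlinarith [mul_le_mul_of_nonneg_right hcs (add_pos hS₁ hS₂).le]

noncomputable def pathSum (x y a b τ : ℝ) : ℝ :=
  Msq (x + τ * a) ((τ * a) ^ 2 + (y + τ * b) ^ 2) + Msq (x - τ * a) ((τ * a) ^ 2 + (y - τ * b) ^ 2)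

section PathSum

variable {x y a b : ℝ}

lemma exists_hasDerivAt_pathSum_nonpos {τ : ℝ} (ha : a ≠ 0) (hτ : 0 < τ) :
    ∃ D ≤ 0, HasDerivAt (pathSum x y a b) D τ := by
  have hτa : τ * a ≠ 0 := mul_ne_zero hτ.ne' ha
  have hw₁ : 0 < (τ * a) ^ 2 + (y + τ * b) ^ 2 := by positivity
  have hw₂ : 0 < (τ * a) ^ 2 + (y - τ * b) ^ 2 := by positivity
  have hc₁ : HasDerivAt (fun σ => x + σ * a) a τ := by
    simpa using ((hasDerivAt_id τ).mul_const a).const_add x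
  have hc₂ : HasDerivAt (fun σ => x - σ * a) (-a) τ := by
    simpa using ((hasDerivAt_id τ).mul_const a).const_sub x
  have he₁ : HasDerivAt (fun σ => (σ * a) ^ 2 + (y + σ * b) ^ 2)
      (2 * (τ * a) * a + 2 * (y + τ * b) * b) τ :=
    ((((hasDerivAt_id τ).mul_const a).fun_pow 2).fun_add
      ((((hasDerivAt_id τ).mul_const b).const_add y).fun_pow 2)).congr_deriv (by simp)
  have he₂ : HasDerivAt (fun σ => (σ * a) ^ 2 + (y - σ * b) ^ 2)
      (2 * (τ * a) * a - 2 * (y - τ * b) * b) τ :=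
    ((((hasDerivAt_id τ).mul_const a).fun_pow 2).fun_add
      ((((hasDerivAt_id τ).mul_const b).const_sub y).fun_pow 2)).congr_deriv (by simp; ring)
  refine ⟨_, ?_, (hc₁.Msq he₁ hw₁).add (hc₂.Msq he₂ hw₂)⟩
  have hS₁ := reSqrt_pos (u := x + τ * a) hw₁
  have hS₂ := reSqrt_pos (u := x - τ * a) hw₂
  have hT₁ : 0 ≤ imSqrt (x + τ * a) ((τ * a) ^ 2 + (y + τ * b) ^ 2) := sqrt_nonneg _
  have hT₂ : 0 ≤ imSqrt (x - τ * a) ((τ * a) ^ 2 + (y - τ * b) ^ 2) := sqrt_nonneg _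
  have key := slope_inequality hS₁ hS₂ hT₁ hT₂
    (by rw [reSqrt_sq_sub_imSqrt_sq hw₁.le, reSqrt_sq_sub_imSqrt_sq hw₂.le]; ring)
    (four_mul_reSqrt_sq_mul_imSqrt_sq hw₁.le) (four_mul_reSqrt_sq_mul_imSqrt_sq hw₂.le)
  refine nonpos_of_mul_nonpos_left (b := τ) ?_ hτ
  set S₁ := reSqrt (x + τ * a) ((τ * a) ^ 2 + (y + τ * b) ^ 2)
  set S₂ := reSqrt (x - τ * a) ((τ * a) ^ 2 + (y - τ * b) ^ 2)
  have hD : (3 / 2 * (a * S₁ - (2 * (τ * a) * a + 2 * (y + τ * b) * b) / (4 * S₁)) +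
      3 / 2 * (-a * S₂ - (2 * (τ * a) * a - 2 * (y - τ * b) * b) / (4 * S₂))) * τ =
      3 / (8 * S₁ * S₂) * (4 * (τ * a) * S₁ * S₂ * (S₁ - S₂)
      - ((2 * (τ * a) ^ 2 + (y + τ * b) * ((y + τ * b) - (y - τ * b))) * S₂
        + (2 * (τ * a) ^ 2 - (y - τ * b) * ((y + τ * b) - (y - τ * b))) * S₁)) := by
    field_simp
    ring
  rw [hD]
  exact mul_nonpos_of_nonneg_of_nonpos (by positivity) (by linarith)

lemma antitoneOn_pathSum (ha : a ≠ 0) : AntitoneOn (pathSum x y a b) (Set.Icc 0 1) := by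
  refine antitoneOn_of_deriv_nonpos (convex_Icc 0 1) ?_ ?_ ?_
  · unfold pathSum Msq reSqrt; fun_prop
  · intro τ hτ
    obtain ⟨D, -, hD⟩ := exists_hasDerivAt_pathSum_nonpos (x := x) (y := y) (b := b) ha
      (interior_Icc.subset hτ).1
    exact hD.differentiableAt.differentiableWithinAt
  · intro τ hτ
    obtain ⟨D, hD0, hD⟩ := exists_hasDerivAt_pathSum_nonpos (x := x) (y := y) (b := b) ha
      (interior_Icc.subset hτ).1
    exact hD.deriv ▸ hD0

end PathSum

lemma Msq_add_le (x y a b : ℝ) :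
    Msq (x + a) (a ^ 2 + (y + b) ^ 2) + Msq (x - a) (a ^ 2 + (y - b) ^ 2) ≤ 2 * Msq x (y ^ 2) := by
  have hne (a : ℝ) (ha : a ∈ ({0}ᶜ : Set ℝ)) : pathSum x y a b 1 ≤ 2 * Msq x (y ^ 2) := by
    simpa [pathSum, ← two_mul] using antitoneOn_pathSum ha (by norm_num) (by norm_num) zero_le_one
  have hcont : Continuous fun a => pathSum x y a b 1 := by unfold pathSum Msq reSqrt; fun_prop
  simpa [pathSum] using le_on_closure hne hcont.continuousOn continuousOn_const (by simp)

theorem stmt7 (x y a b : ℝ) (hy : 0 ≤ y) :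
    2 * M x y ≥
      M (x + a) (Real.sqrt (a ^ 2 + (y + b) ^ 2)) +
        M (x - a) (Real.sqrt (a ^ 2 + (y - b) ^ 2)) := by
  rw [M_eq_Msq x hy, M_eq_Msq _ (sqrt_nonneg _), M_eq_Msq _ (sqrt_nonneg _),
    sq_sqrt (by positivity), sq_sqrt (by positivity)]
  exact Msq_add_le x y a b
end

section
/- Let M : ℝ × ℝ≥0 → ℝ satisfy 2M(x,y) ≥ M(x+a, √(a²+(y+b)²)) + M(x-a, √(a²+(y-b)²)) for all x, a, b ∈ ℝ and y ≥ 0, and suppose y ↦ M(x,y) is nonincreasing on [0,∞) for each x. Then for every N ≥ 1, every x, a ∈ ℝ and every y, b ∈ ℝ^N, one has (1/2)(M(x+a, √(a²+‖y+b‖²)) + M(x-a, √(a²+‖y-b‖²))) ≤ M(x, ‖y‖). -/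
/-!
Write `‖y + b‖ = s + t` and `‖y - b‖ = s - t` with `s` the mean of the two norms. The scalar
inequality at the point `(x, s)` with shift `(a, t)` bounds the left-hand side by `M x s`, and the
triangle inequality `‖y‖ ≤ s` together with monotonicity of `M x` gives `M x s ≤ M x ‖y‖`.
-/

theorem two_mul_norm_le_norm_add_add_norm_sub {E : Type*} [SeminormedAddCommGroup E]
    [NormedSpace ℝ E] (y b : E) : 2 * ‖y‖ ≤ ‖y + b‖ + ‖y - b‖ :=
  calc 2 * ‖y‖ = ‖(y + b) + (y - b)‖ := by
          rw [add_add_sub_cancel, ← two_smul ℝ y, norm_smul, Real.norm_two]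
    _ ≤ ‖y + b‖ + ‖y - b‖ := norm_add_le _ _

theorem half_add_le_of_two_mul_le_add (M : ℝ → ℝ → ℝ)
    (hmain : ∀ x a b y : ℝ, 0 ≤ y →
      2 * M x y ≥
        M (x + a) (Real.sqrt (a ^ 2 + (y + b) ^ 2)) +
          M (x - a) (Real.sqrt (a ^ 2 + (y - b) ^ 2)))
    (hmono : ∀ x y₁ y₂ : ℝ, 0 ≤ y₁ → y₁ ≤ y₂ → M x y₂ ≤ M x y₁)
    (x a p q r : ℝ) (hr : 0 ≤ r) (hrpq : 2 * r ≤ p + q) :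
    (1 / 2) * (M (x + a) (Real.sqrt (a ^ 2 + p ^ 2)) +
        M (x - a) (Real.sqrt (a ^ 2 + q ^ 2))) ≤ M x r := by
  have hmid := hmain x a ((p - q) / 2) ((p + q) / 2) (by linarith)
  have hmid_le := hmono x r ((p + q) / 2) hr (by linarith)
  rw [show (p + q) / 2 + (p - q) / 2 = p by ring,
    show (p + q) / 2 - (p - q) / 2 = q by ring] at hmid
  linarith

theorem stmt12_general (M : ℝ → ℝ → ℝ)
    (hmain : ∀ x a b y : ℝ, 0 ≤ y →
      2 * M x y ≥
        M (x + a) (Real.sqrt (a ^ 2 + (y + b) ^ 2)) +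
          M (x - a) (Real.sqrt (a ^ 2 + (y - b) ^ 2)))
    (hmono : ∀ x y₁ y₂ : ℝ, 0 ≤ y₁ → y₁ ≤ y₂ → M x y₂ ≤ M x y₁)
    (N : ℕ) (x a : ℝ) (y b : EuclideanSpace ℝ (Fin N)) :
    (1 / 2) * (M (x + a) (Real.sqrt (a ^ 2 + ‖y + b‖ ^ 2)) +
        M (x - a) (Real.sqrt (a ^ 2 + ‖y - b‖ ^ 2))) ≤ M x ‖y‖ :=
  half_add_le_of_two_mul_le_add M hmain hmono x a _ _ _ (norm_nonneg y)
    (two_mul_norm_le_norm_add_add_norm_sub y b)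

theorem stmt12 (M : ℝ → ℝ → ℝ)
    (hmain : ∀ x a b y : ℝ, 0 ≤ y →
      2 * M x y ≥
        M (x + a) (Real.sqrt (a ^ 2 + (y + b) ^ 2)) +
          M (x - a) (Real.sqrt (a ^ 2 + (y - b) ^ 2)))
    (hmono : ∀ x y₁ y₂ : ℝ, 0 ≤ y₁ → y₁ ≤ y₂ → M x y₂ ≤ M x y₁)
    (N : ℕ) (hN : 1 ≤ N) (x a : ℝ) (y b : EuclideanSpace ℝ (Fin N)) :
    (1 / 2) * (M (x + a) (Real.sqrt (a ^ 2 + ‖y + b‖ ^ 2)) +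
        M (x - a) (Real.sqrt (a ^ 2 + ‖y - b‖ ^ 2))) ≤ M x ‖y‖ :=
  stmt12_general M hmain hmono N x a y b
end

section
/- Let (g_k) be a real-valued discrete-time martingale adapted to a filtration, with g_0 constant and g_k = g_N for all k ≥ N. Define S(g) = (Σ_{k=0}^{N-1} (g_{k+1}-g_k)²)^{1/2}. If U : ℝ × ℝ≥0 → ℝ satisfies 2U(p,q) ≥ U(p+a, √(a²+q²)) + U(p-a, √(a²+q²)) for all p, q, a, and the martingale increments take only two equally likely values ±a conditionally (dyadic martingale), then E U(g_N, S(g)) ≤ U(g_0, 0). -/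
/-!
Summing the zigzag inequality for `U` over the two children of every dyadic interval of level
`N` shows that `∑ᵢ U (g_{N+1}, S_{N+1})` over level `N + 1` is at most twice the corresponding
sum over level `N`; after normalising by `2 ^ N`, the averages `E U(g_N, S_N(g))` are therefore
nonincreasing in `N`, and at `N = 0` the average is `U (g 0 0) 0`.
-/

open Finset

lemma sum_range_two_mul_eq_sum_pairs {M : Type*} [AddCommMonoid M] (n : ℕ) (f : ℕ → M) :
    ∑ i ∈ range (2 * n), f i = ∑ j ∈ range n, (f (2 * j) + f (2 * j + 1)) := by
  induction n with
  | zero => simp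
  | succ n ih =>
    rw [show 2 * (n + 1) = 2 * n + 1 + 1 by ring, sum_range_succ, sum_range_succ, ih,
      sum_range_succ, add_assoc]

section DyadicMartingale

variable (g : ℕ → ℕ → ℝ)

/-- The square of the square function of `g` at the leaf `i` of level `N`; the ancestor of that
leaf at level `k ≤ N` is `i / 2 ^ (N - k)`. -/
def squareFunSq (N i : ℕ) : ℝ :=
  ∑ k ∈ range N, (g (k + 1) (i / 2 ^ (N - (k + 1))) - g k (i / 2 ^ (N - k))) ^ 2

lemma squareFunSq_nonneg (N i : ℕ) : 0 ≤ squareFunSq g N i :=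
  sum_nonneg fun _ _ => sq_nonneg _

lemma squareFunSq_succ (N i : ℕ) :
    squareFunSq g (N + 1) i = squareFunSq g N (i / 2) + (g (N + 1) i - g N (i / 2)) ^ 2 := by
  have ancestor (m : ℕ) : i / 2 ^ (m + 1) = i / 2 / 2 ^ m := by
    rw [pow_succ', Nat.div_div_eq_div_mul]
  rw [squareFunSq, sum_range_succ]
  congr 1
  · refine sum_congr rfl fun k hk => ?_
    have hk : k < N := mem_range.mp hk
    rw [show N + 1 - (k + 1) = N - (k + 1) + 1 by omega, show N + 1 - k = N - k + 1 by omega,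
      ancestor, ancestor]
  · simp

variable (U : ℝ → ℝ → ℝ)

/-- `2 ^ N` times the expectation of `U (g_N, S_N(g))`. -/
noncomputable def levelSum (N : ℕ) : ℝ :=
  ∑ i ∈ range (2 ^ N), U (g N i) (Real.sqrt (squareFunSq g N i))

variable {g U}

lemma levelSum_succ_le
    (hmart : ∀ k i, g k i = (g (k + 1) (2 * i) + g (k + 1) (2 * i + 1)) / 2)
    (hU : ∀ p q a : ℝ,
      2 * U p q ≥
        U (p + a) (Real.sqrt (a ^ 2 + q ^ 2)) + U (p - a) (Real.sqrt (a ^ 2 + q ^ 2)))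
    (N : ℕ) : levelSum g U (N + 1) ≤ 2 * levelSum g U N := by
  rw [levelSum, levelSum, pow_succ', sum_range_two_mul_eq_sum_pairs, mul_sum]
  refine sum_le_sum fun j _ => ?_
  set a := g (N + 1) (2 * j) - g N j
  have h_left : g (N + 1) (2 * j) = g N j + a := by ring
  have h_right : g (N + 1) (2 * j + 1) = g N j - a := by linarith [hmart N j]
  have h_sqrt : Real.sqrt (a ^ 2 + Real.sqrt (squareFunSq g N j) ^ 2) =
      Real.sqrt (squareFunSq g N j + a ^ 2) := by
    rw [Real.sq_sqrt (squareFunSq_nonneg g N j), add_comm]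
  have hUj := hU (g N j) (Real.sqrt (squareFunSq g N j)) a
  rw [h_sqrt] at hUj
  rw [squareFunSq_succ, squareFunSq_succ, show 2 * j / 2 = j by omega,
    show (2 * j + 1) / 2 = j by omega, h_left, h_right, add_sub_cancel_left, sub_sub_cancel_left,
    neg_sq]
  exact hUj

end DyadicMartingale

/-- A dyadic martingale on `[0,1]` encoded by its values on dyadic intervals:
`g k i` is the value of the `k`-th term on the `i`-th dyadic interval of length `2 ^ (-k)`
(for `i < 2 ^ k`).  The martingale property says the value on an interval is the average of
the values on its two halves; then the increments on the two halves are `±a` with equal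
measure.  The square function at a leaf `i` of level `N` sums the squared increments along
the ancestors `i / 2 ^ (N - k)` of `i`. -/
theorem stmt14 (N : ℕ) (g : ℕ → ℕ → ℝ)
    (hmart : ∀ k i, g k i = (g (k + 1) (2 * i) + g (k + 1) (2 * i + 1)) / 2)
    (U : ℝ → ℝ → ℝ)
    (hU : ∀ p q a : ℝ,
      2 * U p q ≥
        U (p + a) (Real.sqrt (a ^ 2 + q ^ 2)) + U (p - a) (Real.sqrt (a ^ 2 + q ^ 2))) :
    (∑ i ∈ Finset.range (2 ^ N),
        U (g N i)
          (Real.sqrt (∑ k ∈ Finset.range N,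
            (g (k + 1) (i / 2 ^ (N - (k + 1))) - g k (i / 2 ^ (N - k))) ^ 2))) / 2 ^ N ≤
      U (g 0 0) 0 := by
  change levelSum g U N / 2 ^ N ≤ U (g 0 0) 0
  induction N with
  | zero => simp [levelSum, squareFunSq]
  | succ N ih =>
    calc levelSum g U (N + 1) / 2 ^ (N + 1)
        ≤ 2 * levelSum g U N / 2 ^ (N + 1) := by
          gcongr; exact levelSum_succ_le hmart hU N
      _ = levelSum g U N / 2 ^ N := by rw [pow_succ']; field_simp
      _ ≤ U (g 0 0) 0 := ih
end

section
/- For any smooth function u : ℝ × [0,∞) → ℝ such that t ↦ u(p, √t) is convex for each fixed p, and such that u_pp(p,q) + u_q(p,q)/q ≤ 0 for all p ∈ ℝ and q > 0, the global inequality 2u(p,q) ≥ u(p+a, √(a²+q²)) + u(p-a, √(a²+q²)) holds for all p, a ∈ ℝ and q ≥ 0. -/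
open Set Filter Topology
set_option maxHeartbeats 1000000

lemma min_principle (F Fx Fxx Ft : ℝ → ℝ → ℝ) {a T : ℝ} (ha : 0 < a) (hT : 0 < T)
    (hcont : ContinuousOn (fun z : ℝ × ℝ => F z.1 z.2) (Icc (-a) a ×ˢ Icc 0 T))
    (hdx : ∀ x ∈ Icc (-a) a, ∀ t ∈ Icc (0:ℝ) T, HasDerivAt (fun y => F y t) (Fx x t) x)
    (hdxx : ∀ x ∈ Icc (-a) a, ∀ t ∈ Icc (0:ℝ) T, HasDerivAt (fun y => Fx y t) (Fxx x t) x)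
    (hdt : ∀ x ∈ Icc (-a) a, ∀ t ∈ Icc (0:ℝ) T, HasDerivAt (fun s => F x s) (Ft x t) t)
    (hstrict : ∀ x ∈ Icc (-a) a, ∀ t ∈ Icc (0:ℝ) T, 2 * Ft x t + Fxx x t < 0)
    (hlat₁ : ∀ t ∈ Icc (0:ℝ) T, 0 ≤ F (-a) t)
    (hlat₂ : ∀ t ∈ Icc (0:ℝ) T, 0 ≤ F a t)
    (hterm : ∀ x ∈ Icc (-a) a, 0 ≤ F x T) :
    ∀ x ∈ Icc (-a) a, ∀ t ∈ Icc (0:ℝ) T, 0 ≤ F x t := by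
  have hK : IsCompact (Icc (-a) a ×ˢ Icc (0:ℝ) T) := isCompact_Icc.prod isCompact_Icc
  have hne : (Icc (-a) a ×ˢ Icc (0:ℝ) T).Nonempty := by
    refine ⟨(0, 0), ?_⟩
    constructor <;> simp [ha.le, hT.le]
  obtain ⟨z₀, hz₀, hmin⟩ := hK.exists_isMinOn hne hcont
  obtain ⟨hx₀, ht₀⟩ := (Set.mem_prod).mp hz₀
  set x₀ := z₀.1 with hx₀def
  set t₀ := z₀.2 with ht₀def
  have hminle : ∀ x ∈ Icc (-a) a, ∀ t ∈ Icc (0:ℝ) T, F x₀ t₀ ≤ F x t := by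
    intro x hx t ht
    exact hmin (Set.mk_mem_prod hx ht)
  -- it suffices to show the minimum value is nonnegative
  suffices h0 : 0 ≤ F x₀ t₀ by
    intro x hx t ht; exact h0.trans (hminle x hx t ht)
  by_cases hxbd : x₀ = -a ∨ x₀ = a
  · rcases hxbd with h | h
    · rw [show F x₀ t₀ = F (-a) t₀ by rw [h]]; exact hlat₁ t₀ ht₀
    · rw [show F x₀ t₀ = F a t₀ by rw [h]]; exact hlat₂ t₀ ht₀
  by_cases htbd : t₀ = T
  · rw [htbd]; exact hterm x₀ hx₀
  -- interior case: derive a contradiction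
  exfalso
  push_neg at hxbd
  have hx₀i : x₀ ∈ Ioo (-a) a :=
    ⟨lt_of_le_of_ne hx₀.1 (Ne.symm hxbd.1), lt_of_le_of_ne hx₀.2 hxbd.2⟩
  have ht₀T : t₀ < T := lt_of_le_of_ne ht₀.2 htbd
  -- time derivative nonneg
  have hFt : 0 ≤ Ft x₀ t₀ := by
    have hd := hdt x₀ hx₀ t₀ ht₀
    have htends : Tendsto (slope (fun s => F x₀ s) t₀) (𝓝[>] t₀) (𝓝 (Ft x₀ t₀)) :=
      (hasDerivAt_iff_tendsto_slope.mp hd).mono_left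
        (nhdsWithin_mono t₀ fun y hy => (ne_of_gt hy : y ≠ t₀))
    refine ge_of_tendsto htends ?_
    filter_upwards [Ioo_mem_nhdsGT_of_mem ⟨le_refl t₀, ht₀T⟩] with s hs
    have hsin : s ∈ Icc (0:ℝ) T := ⟨ht₀.1.trans hs.1.le, hs.2.le⟩
    rw [slope_def_field]
    have := hminle x₀ hx₀ s hsin
    have hpos : 0 < s - t₀ := sub_pos.mpr hs.1
    exact div_nonneg (by linarith) hpos.le
  -- x derivative zero
  have hFx : Fx x₀ t₀ = 0 := by
    have hlm : IsLocalMin (fun y => F y t₀) x₀ := by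
      have : IsMinOn (fun y => F y t₀) (Icc (-a) a) x₀ := by
        intro y hy
        exact hminle y hy t₀ ht₀
      exact this.isLocalMin (Icc_mem_nhds hx₀i.1 hx₀i.2)
    exact hlm.hasDerivAt_eq_zero (hdx x₀ hx₀ t₀ ht₀)
  -- second x derivative nonneg
  have hFxx : 0 ≤ Fxx x₀ t₀ := by
    by_contra hneg
    push_neg at hneg
    have hd2 := hdxx x₀ hx₀ t₀ ht₀
    have htends : Tendsto (slope (fun y => Fx y t₀) x₀) (𝓝[>] x₀) (𝓝 (Fxx x₀ t₀)) :=
      (hasDerivAt_iff_tendsto_slope.mp hd2).mono_left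
        (nhdsWithin_mono x₀ fun y hy => (ne_of_gt hy : y ≠ x₀))
    have hev : ∀ᶠ y in 𝓝[>] x₀, Fx y t₀ < 0 ∧ y < a := by
      have h1 : ∀ᶠ y in 𝓝[>] x₀, slope (fun y => Fx y t₀) x₀ y < 0 :=
        htends (Iio_mem_nhds hneg)
      have h2 : ∀ᶠ y in 𝓝[>] x₀, y < a :=
        eventually_nhdsWithin_of_eventually_nhds (eventually_lt_nhds hx₀i.2)
      filter_upwards [h1, h2, self_mem_nhdsWithin] with y hy1 hy2 (hy3 : x₀ < y)
      refine ⟨?_, hy2⟩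
      rw [slope_def_field, hFx, sub_zero] at hy1
      have hpos := sub_pos.mpr hy3
      by_contra hcon
      push_neg at hcon
      exact absurd hy1 (not_lt.mpr (div_nonneg hcon hpos.le))
    obtain ⟨u, hu, hsub⟩ := mem_nhdsGT_iff_exists_Ioc_subset.mp hev
    set y₁ := min u ((x₀ + a) / 2) with hy₁def
    have hx₀y₁ : x₀ < y₁ := lt_min hu (by linarith [hx₀i.2])
    have hy₁a : y₁ < a := lt_of_le_of_lt (min_le_right _ _) (by linarith [hx₀i.1, hx₀i.2])
    have hy₁mem : y₁ ∈ Icc (-a) a := ⟨by linarith [hx₀.1], hy₁a.le⟩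
    have hIccsub : Icc x₀ y₁ ⊆ Icc (-a) a := fun y hy => ⟨hx₀.1.trans hy.1, hy.2.trans hy₁a.le⟩
    obtain ⟨ξ, hξ, hξeq⟩ := exists_hasDerivAt_eq_slope (fun y => F y t₀) (fun y => Fx y t₀)
      hx₀y₁
      (fun y hy => ((hdx y (hIccsub hy) t₀ ht₀).continuousAt).continuousWithinAt)
      (fun y hy => hdx y (hIccsub ⟨hy.1.le, hy.2.le⟩) t₀ ht₀)
    have hξneg : Fx ξ t₀ < 0 :=
      (hsub ⟨hξ.1, hξ.2.le.trans (min_le_left _ _)⟩).1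
    have hξnn : 0 ≤ Fx ξ t₀ := by
      rw [hξeq]
      have := hminle y₁ hy₁mem t₀ ht₀
      have hpos : 0 < y₁ - x₀ := sub_pos.mpr hx₀y₁
      exact div_nonneg (by linarith) hpos.le
    linarith
  have := hstrict x₀ hx₀ t₀ ht₀
  linarith


section BMinfra

variable {u : ℝ → ℝ → ℝ}

lemma BM_contDiffAt (hsmooth : ContDiffOn ℝ (⊤ : ℕ∞) (fun z : ℝ × ℝ => u z.1 z.2) (Set.univ ×ˢ Set.Ici 0))
    {x r : ℝ} (hr : 0 < r) :
    ContDiffAt ℝ (⊤ : ℕ∞) (fun z : ℝ × ℝ => u z.1 z.2) (x, r) := by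
  apply hsmooth.contDiffAt
  rw [mem_nhds_iff]
  exact ⟨Set.univ ×ˢ Set.Ioi 0, Set.prod_mono (subset_refl _) Set.Ioi_subset_Ici_self,
    isOpen_univ.prod isOpen_Ioi, Set.mem_prod.mpr ⟨trivial, hr⟩⟩

lemma BM_hasDerivAt_x (hsmooth : ContDiffOn ℝ (⊤ : ℕ∞) (fun z : ℝ × ℝ => u z.1 z.2) (Set.univ ×ˢ Set.Ici 0))
    {r : ℝ} (hr : 0 < r) (x : ℝ) :
    HasDerivAt (fun y => u y r) (deriv (fun y => u y r) x) x := by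
  have h := ((BM_contDiffAt hsmooth hr (x := x)).differentiableAt (by simp)).hasFDerivAt
  have hι : HasDerivAt (fun y : ℝ => (y, r)) ((1:ℝ), (0:ℝ)) x :=
    (hasDerivAt_id x).prodMk (hasDerivAt_const x r)
  have h2 : HasDerivAt (fun y => u y r)
      (fderiv ℝ (fun z : ℝ × ℝ => u z.1 z.2) (x, r) (1, 0)) x := h.comp_hasDerivAt (l := fun z : ℝ × ℝ => u z.1 z.2) x hι
  exact h2.differentiableAt.hasDerivAt

lemma BM_deriv_x_eq (hsmooth : ContDiffOn ℝ (⊤ : ℕ∞) (fun z : ℝ × ℝ => u z.1 z.2) (Set.univ ×ˢ Set.Ici 0))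
    {r : ℝ} (hr : 0 < r) (x : ℝ) :
    deriv (fun y => u y r) x = fderiv ℝ (fun z : ℝ × ℝ => u z.1 z.2) (x, r) (1, 0) := by
  have h := ((BM_contDiffAt hsmooth hr (x := x)).differentiableAt (by simp)).hasFDerivAt
  have hι : HasDerivAt (fun y : ℝ => (y, r)) ((1:ℝ), (0:ℝ)) x :=
    (hasDerivAt_id x).prodMk (hasDerivAt_const x r)
  exact (h.comp_hasDerivAt x hι).deriv

lemma BM_hasDerivAt_q (hsmooth : ContDiffOn ℝ (⊤ : ℕ∞) (fun z : ℝ × ℝ => u z.1 z.2) (Set.univ ×ˢ Set.Ici 0))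
    {r : ℝ} (hr : 0 < r) (x : ℝ) :
    HasDerivAt (fun s => u x s) (deriv (fun s => u x s) r) r := by
  have h := ((BM_contDiffAt hsmooth hr (x := x)).differentiableAt (by simp)).hasFDerivAt
  have hι : HasDerivAt (fun s : ℝ => (x, s)) ((0:ℝ), (1:ℝ)) r :=
    (hasDerivAt_const r x).prodMk (hasDerivAt_id r)
  have h2 : HasDerivAt (fun s => u x s)
      (fderiv ℝ (fun z : ℝ × ℝ => u z.1 z.2) (x, r) (0, 1)) r := h.comp_hasDerivAt r hι
  exact h2.differentiableAt.hasDerivAt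

lemma BM_deriv_q_eq (hsmooth : ContDiffOn ℝ (⊤ : ℕ∞) (fun z : ℝ × ℝ => u z.1 z.2) (Set.univ ×ˢ Set.Ici 0))
    {r : ℝ} (hr : 0 < r) (x : ℝ) :
    deriv (fun s => u x s) r = fderiv ℝ (fun z : ℝ × ℝ => u z.1 z.2) (x, r) (0, 1) := by
  have h := ((BM_contDiffAt hsmooth hr (x := x)).differentiableAt (by simp)).hasFDerivAt
  have hι : HasDerivAt (fun s : ℝ => (x, s)) ((0:ℝ), (1:ℝ)) r :=
    (hasDerivAt_const r x).prodMk (hasDerivAt_id r)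
  exact (h.comp_hasDerivAt r hι).deriv

lemma BM_hasDerivAt_xx (hsmooth : ContDiffOn ℝ (⊤ : ℕ∞) (fun z : ℝ × ℝ => u z.1 z.2) (Set.univ ×ˢ Set.Ici 0))
    {r : ℝ} (hr : 0 < r) (x : ℝ) :
    HasDerivAt (fun y => deriv (fun z => u z r) y)
      (deriv (fun y => deriv (fun z => u z r) y) x) x := by
  have hfun : (fun y => deriv (fun z => u z r) y)
      = (fun y => fderiv ℝ (fun z : ℝ × ℝ => u z.1 z.2) (y, r) (1, 0)) :=
    funext fun y => BM_deriv_x_eq hsmooth hr y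
  have hfd : ContDiffAt ℝ 1 (fderiv ℝ (fun z : ℝ × ℝ => u z.1 z.2)) (x, r) :=
    (BM_contDiffAt hsmooth hr (x := x)).fderiv_right (by exact WithTop.coe_le_coe.mpr le_top)
  have hι : ContDiffAt ℝ 1 (fun y : ℝ => (y, r)) x := contDiffAt_id.prodMk contDiffAt_const
  have hcomp : ContDiffAt ℝ 1
      (fun y : ℝ => fderiv ℝ (fun z : ℝ × ℝ => u z.1 z.2) (y, r)) x := hfd.comp x hι
  have happ : ContDiffAt ℝ 1
      (fun y : ℝ => fderiv ℝ (fun z : ℝ × ℝ => u z.1 z.2) (y, r) ((1:ℝ), (0:ℝ))) x :=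
    hcomp.clm_apply contDiffAt_const
  rw [hfun]
  exact (happ.differentiableAt one_ne_zero).hasDerivAt

lemma BM_contAt_derq (hsmooth : ContDiffOn ℝ (⊤ : ℕ∞) (fun z : ℝ × ℝ => u z.1 z.2) (Set.univ ×ˢ Set.Ici 0))
    {R : ℝ} (hR : 0 < R) (x₀ : ℝ) :
    ContinuousAt (fun y : ℝ => deriv (fun s => u y s) R) x₀ := by
  have hfun : (fun y : ℝ => deriv (fun s => u y s) R)
      = (fun y => fderiv ℝ (fun z : ℝ × ℝ => u z.1 z.2) (y, R) (0, 1)) :=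
    funext fun y => BM_deriv_q_eq hsmooth hR y
  have hfd : ContDiffAt ℝ 1 (fderiv ℝ (fun z : ℝ × ℝ => u z.1 z.2)) (x₀, R) :=
    (BM_contDiffAt hsmooth hR (x := x₀)).fderiv_right (by exact WithTop.coe_le_coe.mpr le_top)
  have hι : ContDiffAt ℝ 1 (fun y : ℝ => (y, R)) x₀ := contDiffAt_id.prodMk contDiffAt_const
  have happ : ContDiffAt ℝ 1
      (fun y : ℝ => fderiv ℝ (fun z : ℝ × ℝ => u z.1 z.2) (y, R) ((0:ℝ), (1:ℝ))) x₀ :=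
    (hfd.comp x₀ hι).clm_apply contDiffAt_const
  rw [hfun]
  exact happ.continuousAt

lemma BM_contAt (hsmooth : ContDiffOn ℝ (⊤ : ℕ∞) (fun z : ℝ × ℝ => u z.1 z.2) (Set.univ ×ˢ Set.Ici 0))
    {x r : ℝ} (hr : 0 < r) :
    ContinuousAt (fun z : ℝ × ℝ => u z.1 z.2) (x, r) :=
  (BM_contDiffAt hsmooth hr).continuousAt

-- derivative in t of t ↦ u x (√(c+t)), at a point with c + t > 0
lemma BM_hasDerivAt_sqrtcomp
    (hsmooth : ContDiffOn ℝ (⊤ : ℕ∞) (fun z : ℝ × ℝ => u z.1 z.2) (Set.univ ×ˢ Set.Ici 0))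
    (x c t : ℝ) (h : 0 < c + t) :
    HasDerivAt (fun s => u x (Real.sqrt (c + s)))
      (deriv (fun s => u x s) (Real.sqrt (c + t)) * (1 / (2 * Real.sqrt (c + t)))) t := by
  have hrpos : 0 < Real.sqrt (c + t) := Real.sqrt_pos.mpr h
  have hinner : HasDerivAt (fun s : ℝ => Real.sqrt (c + s)) (1 / (2 * Real.sqrt (c + t))) t := by
    have h1 : HasDerivAt (fun s : ℝ => c + s) 1 t := by
      exact (hasDerivAt_id' t).const_add c
    have h2 := (Real.hasDerivAt_sqrt (ne_of_gt h)).comp t h1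
    rw [show (1:ℝ) / (2 * Real.sqrt (c + t)) = 1 / (2 * Real.sqrt (c + t)) * 1 by ring]
    exact h2
  have houter := BM_hasDerivAt_q hsmooth hrpos x
  exact houter.comp t hinner

-- derivative of s ↦ u x (√ s) at s₀ > 0
lemma BM_hasDerivAt_sqrtcomp0
    (hsmooth : ContDiffOn ℝ (⊤ : ℕ∞) (fun z : ℝ × ℝ => u z.1 z.2) (Set.univ ×ˢ Set.Ici 0))
    (x s₀ : ℝ) (h : 0 < s₀) :
    HasDerivAt (fun s => u x (Real.sqrt s))
      (deriv (fun s => u x s) (Real.sqrt s₀) * (1 / (2 * Real.sqrt s₀))) s₀ := by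
  have hrpos : 0 < Real.sqrt s₀ := Real.sqrt_pos.mpr h
  have hinner : HasDerivAt (fun s : ℝ => Real.sqrt s) (1 / (2 * Real.sqrt s₀)) s₀ :=
    Real.hasDerivAt_sqrt (ne_of_gt h)
  exact (BM_hasDerivAt_q hsmooth hrpos x).comp s₀ hinner

-- support line from convexity
lemma BM_support (hsmooth : ContDiffOn ℝ (⊤ : ℕ∞) (fun z : ℝ × ℝ => u z.1 z.2) (Set.univ ×ˢ Set.Ici 0))
    (hconv : ∀ p : ℝ, ConvexOn ℝ (Set.Ici 0) (fun t => u p (Real.sqrt t)))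
    (x s₀ : ℝ) (hs₀ : 0 < s₀) {s : ℝ} (hs : 0 ≤ s) :
    u x (Real.sqrt s₀) + (deriv (fun s' => u x s') (Real.sqrt s₀) * (1 / (2 * Real.sqrt s₀)))
      * (s - s₀) ≤ u x (Real.sqrt s) := by
  set m := deriv (fun s' => u x s') (Real.sqrt s₀) * (1 / (2 * Real.sqrt s₀)) with hm
  have hg : HasDerivAt (fun s => u x (Real.sqrt s)) m s₀ := BM_hasDerivAt_sqrtcomp0 hsmooth x s₀ hs₀
  rcases lt_trichotomy s s₀ with hlt | heq | hgt
  · have hslope := (hconv x).slope_le_of_hasDerivAt hs (le_of_lt hs₀) hlt hg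
    rw [slope_def_field] at hslope
    have hpos : 0 < s₀ - s := by linarith
    have := (div_le_iff₀ hpos).mp hslope
    nlinarith
  · subst heq; simp
  · have hslope := (hconv x).le_slope_of_hasDerivAt (le_of_lt hs₀) (hs₀.le.trans hgt.le) hgt hg
    rw [slope_def_field] at hslope
    have hpos : 0 < s - s₀ := by linarith
    have := (le_div_iff₀ hpos).mp hslope
    nlinarith

end BMinfra

lemma BM_core (u : ℝ → ℝ → ℝ)
    (hsmooth : ContDiffOn ℝ (⊤ : ℕ∞) (fun z : ℝ × ℝ => u z.1 z.2) (Set.univ ×ˢ Set.Ici 0))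
    (hconv : ∀ p : ℝ, ConvexOn ℝ (Set.Ici 0) (fun t => u p (Real.sqrt t)))
    (hpde : ∀ p q : ℝ, 0 < q →
      deriv (fun p' => deriv (fun p'' => u p'' q) p') p + deriv (fun q' => u p q') q / q ≤ 0)
    (p a q : ℝ) (ha : 0 < a) (hq : 0 < q) :
    u (p + a) (Real.sqrt (a ^ 2 + q ^ 2)) + u (p - a) (Real.sqrt (a ^ 2 + q ^ 2)) ≤ 2 * u p q := by
  have hane : a ≠ 0 := ne_of_gt ha
  set s₀ : ℝ := a ^ 2 + q ^ 2 with hs₀def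
  have hs₀pos : 0 < s₀ := by positivity
  set R : ℝ := Real.sqrt s₀ with hRdef
  have hRpos : 0 < R := Real.sqrt_pos.mpr hs₀pos
  have hπ := Real.pi_pos
  set μ : ℝ := Real.pi / (4 * a) with hμdef
  have hμpos : 0 < μ := by rw [hμdef]; positivity
  set lam : ℝ := μ ^ 2 / 4 with hlamdef
  have hlampos : 0 < lam := by rw [hlamdef]; positivity
  have hμa : μ * a = Real.pi / 4 := by rw [hμdef]; field_simp
  set m₁ : ℝ := deriv (fun s' => u (p + a) s') R * (1 / (2 * R)) with hm₁
  set m₂ : ℝ := deriv (fun s' => u (p - a) s') R * (1 / (2 * R)) with hm₂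
  set v₁ : ℝ := u (p + a) R with hv₁
  set v₂ : ℝ := u (p - a) R with hv₂
  set C : ℝ := -(m₁ + m₂) / 2 with hC
  set D : ℝ := (m₂ - m₁) / (6 * a) with hD
  set c₁ : ℝ := v₁ - a ^ 2 * m₁ with hc₁
  set c₂ : ℝ := v₂ - a ^ 2 * m₂ with hc₂
  set A : ℝ := (c₁ + c₂) / 2 - C * a ^ 2 with hA
  set B : ℝ := (c₁ - c₂) / (2 * a) - D * a ^ 2 with hB
  clear_value s₀ R μ lam m₁ m₂ v₁ v₂ C D c₁ c₂ A B
  -- boundary values of the caloric polynomial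
  have hpoly₁ : ∀ t : ℝ, A + B * a + C * (a ^ 2 - t) + D * (a ^ 3 - 3 * a * t)
      = v₁ + m₁ * (t - a ^ 2) := by
    intro t
    rw [hA, hB, hC, hD, hc₁, hc₂]
    field_simp
    ring
  have hpoly₂ : ∀ t : ℝ, A + B * (-a) + C * ((-a) ^ 2 - t) + D * ((-a) ^ 3 - 3 * (-a) * t)
      = v₂ + m₂ * (t - a ^ 2) := by
    intro t
    rw [hA, hB, hC, hD, hc₁, hc₂]
    field_simp
    ring
  have hA0 : A = (v₁ + v₂) / 2 := by
    rw [hA, hC, hc₁, hc₂]; ring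
  -- support line inequality
  have hsup : ∀ x t : ℝ, 0 ≤ t →
      u x R + (deriv (fun s' => u x s') R * (1 / (2 * R))) * (t - a ^ 2)
        ≤ u x (Real.sqrt (q ^ 2 + t)) := by
    intro x t ht
    have hstep := BM_support hsmooth hconv x s₀ hs₀pos (s := q ^ 2 + t) (by positivity)
    rw [← hRdef] at hstep
    have e1 : q ^ 2 + t - s₀ = t - a ^ 2 := by rw [hs₀def]; ring
    rw [e1] at hstep
    exact hstep
  -- the key estimate with an ε of room
  have key : ∀ ε : ℝ, 0 < ε → v₁ + v₂ ≤ 2 * u p q + 2 * ε := by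
    intro ε hε
    -- bounds for choosing the terminal time
    have hcont_c : ContinuousOn (fun x : ℝ =>
        u (p + x) R - a ^ 2 * (deriv (fun s' => u (p + x) s') R * (1 / (2 * R)))
          - (A + B * x + C * x ^ 2 + D * x ^ 3)) (Icc (-a) a) := by
      apply ContinuousOn.sub
      apply ContinuousOn.sub
      · intro x _
        have h1 : ContinuousAt (fun x : ℝ => u (p + x) R) x := by
          have hmap : ContinuousAt (fun x : ℝ => ((p + x : ℝ), R)) x :=
            ((continuous_const.add continuous_id).prodMk continuous_const).continuousAt
          have hcomp : ContinuousAt ((fun z : ℝ × ℝ => u z.1 z.2) ∘ (fun x : ℝ => ((p + x : ℝ), R))) x :=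
            ContinuousAt.comp (BM_contAt hsmooth hRpos) hmap
          exact hcomp
        exact h1.continuousWithinAt
      · intro x _
        have h1 : ContinuousAt (fun x : ℝ => deriv (fun s' => u (p + x) s') R) x := by
          have hshift : ContinuousAt (fun x : ℝ => p + x) x :=
            (continuous_const.add continuous_id).continuousAt
          exact (BM_contAt_derq hsmooth hRpos (p + x)).comp hshift
        exact ((continuousAt_const.mul (h1.mul continuousAt_const))).continuousWithinAt
      · exact Continuous.continuousOn (by fun_prop)
    have hcont_d : ContinuousOn (fun x : ℝ =>
        deriv (fun s' => u (p + x) s') R * (1 / (2 * R)) + (C + 3 * D * x)) (Icc (-a) a) := by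
      apply ContinuousOn.add
      · intro x _
        have hshift : ContinuousAt (fun x : ℝ => p + x) x :=
          (continuous_const.add continuous_id).continuousAt
        exact (((BM_contAt_derq hsmooth hRpos (p + x)).comp hshift).mul
          continuousAt_const).continuousWithinAt
      · exact Continuous.continuousOn (by fun_prop)
    obtain ⟨M₁, hM₁⟩ := isCompact_Icc.exists_bound_of_continuousOn hcont_c
    obtain ⟨M₂, hM₂⟩ := isCompact_Icc.exists_bound_of_continuousOn hcont_d
    set M : ℝ := |M₁| + |M₂| with hMdef
    have hMc : ∀ x ∈ Icc (-a) a, |u (p + x) R - a ^ 2 * (deriv (fun s' => u (p + x) s') R * (1 / (2 * R)))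
          - (A + B * x + C * x ^ 2 + D * x ^ 3)| ≤ M := by
      intro x hx
      have := hM₁ x hx
      rw [Real.norm_eq_abs] at this
      have h2 : M₁ ≤ |M₁| := le_abs_self M₁
      have h3 : 0 ≤ |M₂| := abs_nonneg _
      rw [hMdef]; linarith
    have hMd : ∀ x ∈ Icc (-a) a,
        |deriv (fun s' => u (p + x) s') R * (1 / (2 * R)) + (C + 3 * D * x)| ≤ M := by
      intro x hx
      have := hM₂ x hx
      rw [Real.norm_eq_abs] at this
      have h2 : M₂ ≤ |M₂| := le_abs_self M₂
      have h3 : 0 ≤ |M₁| := abs_nonneg _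
      rw [hMdef]; linarith
    have hM0 : 0 ≤ M := by rw [hMdef]; positivity
    clear_value M
    -- choose terminal time
    set κ : ℝ := ε * (Real.sqrt 2 / 2) * (lam ^ 2 / 4) with hκdef
    have hκpos : 0 < κ := by
      rw [hκdef]
      have : (0:ℝ) < Real.sqrt 2 := Real.sqrt_pos.mpr (by norm_num)
      positivity
    set T : ℝ := max 1 ((2 * M + 2) / κ) with hTdef
    have hT1 : (1:ℝ) ≤ T := le_max_left _ _
    have hT : 0 < T := lt_of_lt_of_le one_pos hT1
    have hTκ : (2 * M + 2) / κ ≤ T := le_max_right _ _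
    have hTbig : 2 * M + 2 ≤ κ * T := by
      rw [div_le_iff₀ hκpos] at hTκ
      linarith
    clear_value κ T
    -- the exponential dominates
    have hexpT : ε * (Real.sqrt 2 / 2) * Real.exp (lam * T) ≥ M + T * M := by
      have h1 : Real.exp (lam * T) = Real.exp (lam * T / 2) * Real.exp (lam * T / 2) := by
        rw [← Real.exp_add]; ring_nf
      have h2 : lam * T / 2 + 1 ≤ Real.exp (lam * T / 2) := Real.add_one_le_exp _
      have h3 : 0 ≤ lam * T / 2 := by positivity
      have h4 : (lam * T / 2) ^ 2 ≤ Real.exp (lam * T) := by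
        rw [h1]
        have h4' : lam * T / 2 ≤ Real.exp (lam * T / 2) := by linarith
        rw [pow_two]
        exact mul_le_mul h4' h4' h3 (h3.trans h4')
      have h5 : κ * T ^ 2 ≤ ε * (Real.sqrt 2 / 2) * Real.exp (lam * T) := by
        have : κ * T ^ 2 = ε * (Real.sqrt 2 / 2) * ((lam * T / 2) ^ 2) := by
          rw [hκdef]; ring
        rw [this]
        have hs2 : (0:ℝ) < Real.sqrt 2 := Real.sqrt_pos.mpr (by norm_num)
        have hnn : 0 ≤ ε * (Real.sqrt 2 / 2) := by positivity
        exact mul_le_mul_of_nonneg_left h4 hnn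
      have h6 : (2 * M + 2) * T ≤ κ * T ^ 2 := by
        have he : κ * T ^ 2 = (κ * T) * T := by ring
        rw [he]
        exact mul_le_mul_of_nonneg_right hTbig hT.le
      have h7 : M ≤ M * T := le_mul_of_one_le_right hM0 hT1
      have h8 : M * T = T * M := by ring
      linarith
    -- now set up the comparison function and apply the minimum principle
    have hmain := min_principle
      (fun x t => u (p + x) (Real.sqrt (q ^ 2 + t))
        - (A + B * x + C * (x ^ 2 - t) + D * (x ^ 3 - 3 * x * t))
        + ε * Real.exp (lam * t) * Real.cos (μ * x))
      (fun x t => deriv (fun z => u z (Real.sqrt (q ^ 2 + t))) (p + x)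
        - (B + C * (2 * x) + D * (3 * x ^ 2 - 3 * t))
        + ε * Real.exp (lam * t) * (-Real.sin (μ * x) * μ))
      (fun x t => deriv (fun y => deriv (fun z => u z (Real.sqrt (q ^ 2 + t))) y) (p + x)
        - (C * 2 + D * (6 * x))
        + ε * Real.exp (lam * t) * (-Real.cos (μ * x) * μ * μ))
      (fun x t => deriv (fun s => u (p + x) s) (Real.sqrt (q ^ 2 + t))
          * (1 / (2 * Real.sqrt (q ^ 2 + t)))
        + (C + 3 * D * x)
        + ε * (Real.exp (lam * t) * lam) * Real.cos (μ * x))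
      ha hT ?_ ?_ ?_ ?_ ?_ ?_ ?_ ?_
    · -- extract the conclusion at (0,0)
      have h00 := hmain 0 ⟨by linarith, ha.le⟩ 0 ⟨le_refl 0, hT.le⟩
      beta_reduce at h00
      have e1 : Real.sqrt (q ^ 2 + 0) = q := by
        rw [add_zero, Real.sqrt_sq hq.le]
      rw [e1] at h00
      have h00' : 0 ≤ u p q - A + ε := by
        have e2 : u p q - (A + B * 0 + C * (0 ^ 2 - 0) + D * (0 ^ 3 - 3 * 0 * 0))
            + ε * Real.exp (lam * 0) * Real.cos (μ * 0)
            = u p q - A + ε := by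
          norm_num
        rw [show p + 0 = p from add_zero p, e2] at h00
        exact h00
      linarith [h00', hA0.le, hA0.ge]
    · -- continuity
      intro z hz
      beta_reduce
      obtain ⟨hz1, hz2⟩ := Set.mem_prod.mp hz
      have hq2z : 0 < q ^ 2 + z.2 := by
        have := hz2.1; positivity
      apply ContinuousWithinAt.add
      apply ContinuousWithinAt.sub
      · have hmap : ContinuousAt (fun w : ℝ × ℝ => ((p + w.1 : ℝ), Real.sqrt (q ^ 2 + w.2))) z := by
          apply ContinuousAt.prodMk
          · exact (continuous_const.add continuous_fst).continuousAt
          · exact (Real.continuous_sqrt.comp (continuous_const.add continuous_snd)).continuousAt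
        have hcomp : ContinuousAt ((fun z : ℝ × ℝ => u z.1 z.2)
            ∘ (fun w : ℝ × ℝ => ((p + w.1 : ℝ), Real.sqrt (q ^ 2 + w.2)))) z :=
          ContinuousAt.comp (BM_contAt hsmooth (Real.sqrt_pos.mpr hq2z)) hmap
        exact hcomp.continuousWithinAt
      · apply Continuous.continuousWithinAt; fun_prop
      · apply Continuous.continuousWithinAt
        apply Continuous.mul
        · exact (continuous_const.mul (Real.continuous_exp.comp (continuous_const.mul continuous_snd)))
        · exact Real.continuous_cos.comp (continuous_const.mul continuous_fst)
    · -- x-derivative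
      intro x hx t ht
      have hq2t : 0 < q ^ 2 + t := by have := ht.1; positivity
      have hr : 0 < Real.sqrt (q ^ 2 + t) := Real.sqrt_pos.mpr hq2t
      have hshift : HasDerivAt (fun y : ℝ => p + y) 1 x := by
        exact (hasDerivAt_id' x).const_add p
      have p1 : HasDerivAt (fun y => u (p + y) (Real.sqrt (q ^ 2 + t)))
          (deriv (fun z => u z (Real.sqrt (q ^ 2 + t))) (p + x)) x := by
        have := (BM_hasDerivAt_x hsmooth hr (p + x)).comp x hshift
        simpa [Function.comp_def] using this
      have h1 : HasDerivAt (fun y : ℝ => y) 1 x := hasDerivAt_id x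
      have hB' : HasDerivAt (fun y : ℝ => B * y) B x := by simpa using h1.const_mul B
      have hsq : HasDerivAt (fun y : ℝ => y ^ 2 - t) (2 * x) x := by
        simpa using (hasDerivAt_pow 2 x).sub_const t
      have hCt : HasDerivAt (fun y : ℝ => C * (y ^ 2 - t)) (C * (2 * x)) x := hsq.const_mul C
      have hcub : HasDerivAt (fun y : ℝ => y ^ 3 - 3 * y * t) (3 * x ^ 2 - 3 * t) x := by
        have h3y : HasDerivAt (fun y : ℝ => 3 * y * t) (3 * t) x := by
          have := ((h1.const_mul (3:ℝ)).mul_const t)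
          convert this using 1 <;> try rfl
          first
          | ring
          | skip
        have := (hasDerivAt_pow 3 x).sub h3y
        convert this using 1 <;> try rfl
        all_goals push_cast; ring
      have hDt : HasDerivAt (fun y : ℝ => D * (y ^ 3 - 3 * y * t)) (D * (3 * x ^ 2 - 3 * t)) x :=
        hcub.const_mul D
      have p2 : HasDerivAt (fun y : ℝ => A + B * y + C * (y ^ 2 - t) + D * (y ^ 3 - 3 * y * t))
          (B + C * (2 * x) + D * (3 * x ^ 2 - 3 * t)) x :=
        ((hB'.const_add A).add hCt).add hDt
      have hμy : HasDerivAt (fun y : ℝ => μ * y) μ x := by simpa using h1.const_mul μ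
      have hcosd : HasDerivAt (fun y : ℝ => Real.cos (μ * y)) (-Real.sin (μ * x) * μ) x :=
        (Real.hasDerivAt_cos (μ * x)).comp x hμy
      have p3 : HasDerivAt (fun y : ℝ => ε * Real.exp (lam * t) * Real.cos (μ * y))
          (ε * Real.exp (lam * t) * (-Real.sin (μ * x) * μ)) x :=
        hcosd.const_mul (ε * Real.exp (lam * t))
      exact (p1.sub p2).add p3
    · -- second x-derivative
      intro x hx t ht
      have hq2t : 0 < q ^ 2 + t := by have := ht.1; positivity
      have hr : 0 < Real.sqrt (q ^ 2 + t) := Real.sqrt_pos.mpr hq2t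
      have hshift : HasDerivAt (fun y : ℝ => p + y) 1 x := by
        exact (hasDerivAt_id' x).const_add p
      have p1 : HasDerivAt (fun y => deriv (fun z => u z (Real.sqrt (q ^ 2 + t))) (p + y))
          (deriv (fun y' => deriv (fun z => u z (Real.sqrt (q ^ 2 + t))) y') (p + x)) x := by
        have := (BM_hasDerivAt_xx hsmooth hr (p + x)).comp x hshift
        simpa [Function.comp_def] using this
      have h1 : HasDerivAt (fun y : ℝ => y) 1 x := hasDerivAt_id x
      have h2y : HasDerivAt (fun y : ℝ => 2 * y) 2 x := by simpa using h1.const_mul (2:ℝ)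
      have hC2 : HasDerivAt (fun y : ℝ => C * (2 * y)) (C * 2) x := by
        have := h2y.const_mul C
        convert this using 1 <;> try rfl
      have hsq3 : HasDerivAt (fun y : ℝ => 3 * y ^ 2 - 3 * t) (6 * x) x := by
        have := ((hasDerivAt_pow 2 x).const_mul (3:ℝ)).sub_const (3 * t)
        convert this using 1 <;> try rfl
        push_cast
        ring
      have hD6 : HasDerivAt (fun y : ℝ => D * (3 * y ^ 2 - 3 * t)) (D * (6 * x)) x :=
        hsq3.const_mul D
      have p2 : HasDerivAt (fun y : ℝ => B + C * (2 * y) + D * (3 * y ^ 2 - 3 * t))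
          (C * 2 + D * (6 * x)) x := by
        have := (hC2.const_add B).add hD6
        convert this using 1 <;> try rfl
      have hμy : HasDerivAt (fun y : ℝ => μ * y) μ x := by simpa using h1.const_mul μ
      have hsind : HasDerivAt (fun y : ℝ => Real.sin (μ * y)) (Real.cos (μ * x) * μ) x :=
        (Real.hasDerivAt_sin (μ * x)).comp x hμy
      have p3 : HasDerivAt (fun y : ℝ => ε * Real.exp (lam * t) * (-Real.sin (μ * y) * μ))
          (ε * Real.exp (lam * t) * (-Real.cos (μ * x) * μ * μ)) x := by
        have := ((hsind.neg).mul_const μ).const_mul (ε * Real.exp (lam * t))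
        convert this using 1 <;> try rfl
        ring
      exact (p1.sub p2).add p3
    · -- t-derivative
      intro x hx t ht
      have hq2t : 0 < q ^ 2 + t := by have := ht.1; positivity
      have p1 : HasDerivAt (fun s => u (p + x) (Real.sqrt (q ^ 2 + s)))
          (deriv (fun s => u (p + x) s) (Real.sqrt (q ^ 2 + t))
            * (1 / (2 * Real.sqrt (q ^ 2 + t)))) t :=
        BM_hasDerivAt_sqrtcomp hsmooth (p + x) (q ^ 2) t hq2t
      have h1 : HasDerivAt (fun s : ℝ => s) 1 t := hasDerivAt_id t
      have hCs : HasDerivAt (fun s : ℝ => C * (x ^ 2 - s)) (C * (-1)) t := by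
        have := (h1.const_sub (x ^ 2)).const_mul C
        simpa using this
      have hDs : HasDerivAt (fun s : ℝ => D * (x ^ 3 - 3 * x * s)) (D * (-(3 * x))) t := by
        have h3xs : HasDerivAt (fun s : ℝ => 3 * x * s) (3 * x) t := by
          simpa using h1.const_mul (3 * x)
        have := (h3xs.const_sub (x ^ 3)).const_mul D
        simpa using this
      have p2 : HasDerivAt (fun s : ℝ => A + B * x + C * (x ^ 2 - s) + D * (x ^ 3 - 3 * x * s))
          (C * (-1) + D * (-(3 * x))) t := by
        have h' := ((hCs.const_add (A + B * x)).add hDs)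
        convert h' using 2 <;> try rfl
        first
        | ring
        | skip
      have hexp : HasDerivAt (fun s : ℝ => Real.exp (lam * s)) (Real.exp (lam * t) * lam) t := by
        have hls : HasDerivAt (fun s : ℝ => lam * s) lam t := by
          simpa using (hasDerivAt_id t).const_mul lam
        exact (Real.hasDerivAt_exp (lam * t)).comp t hls
      have p3 : HasDerivAt (fun s : ℝ => ε * Real.exp (lam * s) * Real.cos (μ * x))
          (ε * (Real.exp (lam * t) * lam) * Real.cos (μ * x)) t := by
        have h'' := (hexp.const_mul ε).mul_const (Real.cos (μ * x))
        convert h'' using 1 <;> try rfl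
        first
        | ring
        | skip
      have := (p1.sub p2).add p3
      convert this using 1 <;> try rfl
      ring
    · -- the strict differential inequality
      intro x hx t ht
      beta_reduce
      have hq2t : 0 < q ^ 2 + t := by have := ht.1; positivity
      have hr : 0 < Real.sqrt (q ^ 2 + t) := Real.sqrt_pos.mpr hq2t
      have hp := hpde (p + x) (Real.sqrt (q ^ 2 + t)) hr
      have hcos : 0 < Real.cos (μ * x) := by
        apply Real.cos_pos_of_mem_Ioo
        constructor
        · have h1 : -a ≤ x := hx.1
          have : -(Real.pi / 4) ≤ μ * x := by
            have := mul_le_mul_of_nonneg_left h1 hμpos.le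
            rw [mul_neg, hμa] at this
            linarith
          linarith
        · have h1 : x ≤ a := hx.2
          have : μ * x ≤ Real.pi / 4 := by
            have := mul_le_mul_of_nonneg_left h1 hμpos.le
            rw [hμa] at this
            linarith
          linarith
      have hexp : 0 < Real.exp (lam * t) := Real.exp_pos _
      have hid : 2 * (deriv (fun s => u (p + x) s) (Real.sqrt (q ^ 2 + t))
            * (1 / (2 * Real.sqrt (q ^ 2 + t)))
          + (C + 3 * D * x)
          + ε * (Real.exp (lam * t) * lam) * Real.cos (μ * x))
          + (deriv (fun y => deriv (fun z => u z (Real.sqrt (q ^ 2 + t))) y) (p + x)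
          - (C * 2 + D * (6 * x))
          + ε * Real.exp (lam * t) * (-Real.cos (μ * x) * μ * μ))
          = (deriv (fun p' => deriv (fun p'' => u p'' (Real.sqrt (q ^ 2 + t))) p') (p + x)
              + deriv (fun q' => u (p + x) q') (Real.sqrt (q ^ 2 + t)) / Real.sqrt (q ^ 2 + t))
            + ε * Real.exp (lam * t) * Real.cos (μ * x) * (2 * lam - μ ^ 2) := by
        field_simp
        ring
      rw [hid]
      have hneg : ε * Real.exp (lam * t) * Real.cos (μ * x) * (2 * lam - μ ^ 2) < 0 := by
        have h2l : 2 * lam - μ ^ 2 = -(μ ^ 2 / 2) := by rw [hlamdef]; ring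
        rw [h2l]
        have hprod : 0 < ε * Real.exp (lam * t) * Real.cos (μ * x) :=
          mul_pos (mul_pos hε hexp) hcos
        have h3l : ε * Real.exp (lam * t) * Real.cos (μ * x) * -(μ ^ 2 / 2)
            = -(ε * Real.exp (lam * t) * Real.cos (μ * x) * (μ ^ 2 / 2)) := by ring
        rw [h3l]
        have : 0 < ε * Real.exp (lam * t) * Real.cos (μ * x) * (μ ^ 2 / 2) :=
          mul_pos hprod (by positivity)
        linarith
      linarith
    · -- lateral boundary at -a
      intro t ht
      beta_reduce
      have hsup2 := hsup (p - a) t ht.1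
      rw [← hm₂, ← hv₂] at hsup2
      have hpe := hpoly₂ t
      have hμna : μ * (-a) = -(Real.pi / 4) := by rw [mul_neg, hμa]
      have hcos : 0 ≤ Real.cos (μ * (-a)) := by
        rw [hμna, Real.cos_neg, Real.cos_pi_div_four]
        positivity
      have hexp : 0 < Real.exp (lam * t) := Real.exp_pos _
      have hterm3 : 0 ≤ ε * Real.exp (lam * t) * Real.cos (μ * (-a)) := by positivity
      rw [show p + -a = p - a from by ring]
      linarith [hsup2, hpe, hterm3]
    · -- lateral boundary at a
      intro t ht
      beta_reduce
      have hsup1 := hsup (p + a) t ht.1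
      rw [← hm₁, ← hv₁] at hsup1
      have hpe := hpoly₁ t
      have hcos : 0 ≤ Real.cos (μ * a) := by
        rw [hμa, Real.cos_pi_div_four]; positivity
      have hexp : 0 < Real.exp (lam * t) := Real.exp_pos _
      have hterm3 : 0 ≤ ε * Real.exp (lam * t) * Real.cos (μ * a) := by positivity
      linarith [hsup1, hpe, hterm3]
    · -- terminal boundary
      intro x hx
      beta_reduce
      have hsupx := hsup (p + x) T (by linarith)
      have hcosb : Real.sqrt 2 / 2 ≤ Real.cos (μ * x) := by
        have habs : |μ * x| ≤ Real.pi / 4 := by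
          rw [abs_mul, abs_of_pos hμpos]
          have : |x| ≤ a := abs_le.mpr ⟨hx.1, hx.2⟩
          calc μ * |x| ≤ μ * a := mul_le_mul_of_nonneg_left this hμpos.le
          _ = Real.pi / 4 := hμa
        have h1 : Real.cos (Real.pi / 4) ≤ Real.cos |μ * x| := by
          apply Real.cos_le_cos_of_nonneg_of_le_pi (abs_nonneg _)
          · linarith
          · exact habs
        rw [Real.cos_abs, Real.cos_pi_div_four] at h1
        exact h1
      have hexpb := hexpT
      have hMcx := hMc x hx
      have hMdx := hMd x hx
      have habs1 := abs_le.mp hMcx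
      have habs2 := abs_le.mp hMdx
      have hcos_exp : M + T * M ≤ ε * Real.exp (lam * T) * Real.cos (μ * x) := by
        have h0 : 0 < Real.exp (lam * T) := Real.exp_pos _
        calc M + T * M ≤ ε * (Real.sqrt 2 / 2) * Real.exp (lam * T) := hexpT
        _ = ε * Real.exp (lam * T) * (Real.sqrt 2 / 2) := by ring
        _ ≤ ε * Real.exp (lam * T) * Real.cos (μ * x) := by
            apply mul_le_mul_of_nonneg_left hcosb (by positivity)
      have hdT : -M * T ≤ (deriv (fun s' => u (p + x) s') R * (1 / (2 * R)) + (C + 3 * D * x)) * T :=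
        mul_le_mul_of_nonneg_right habs2.1 hT.le
      linarith [hsupx, habs1.1, hdT, hcos_exp]
  -- conclude from the ε-estimate
  have hfin : v₁ + v₂ ≤ 2 * u p q := by
    by_contra hcon
    push_neg at hcon
    have hδ : 0 < (v₁ + v₂ - 2 * u p q) / 4 := by linarith
    have := key _ hδ
    linarith
  exact hfin

theorem stmt15 (u : ℝ → ℝ → ℝ)
    (hsmooth : ContDiffOn ℝ (⊤ : ℕ∞) (fun z : ℝ × ℝ => u z.1 z.2) (Set.univ ×ˢ Set.Ici 0))
    (hconv : ∀ p : ℝ, ConvexOn ℝ (Set.Ici 0) (fun t => u p (Real.sqrt t)))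
    (hpde : ∀ p q : ℝ, 0 < q →
      deriv (fun p' => deriv (fun p'' => u p'' q) p') p + deriv (fun q' => u p q') q / q ≤ 0)
    (p a q : ℝ) (hq : 0 ≤ q) :
    2 * u p q ≥
      u (p + a) (Real.sqrt (a ^ 2 + q ^ 2)) + u (p - a) (Real.sqrt (a ^ 2 + q ^ 2)) := by
  have main : ∀ a' : ℝ, 0 < a' → ∀ q' : ℝ, 0 ≤ q' →
      u (p + a') (Real.sqrt (a' ^ 2 + q' ^ 2)) + u (p - a') (Real.sqrt (a' ^ 2 + q' ^ 2))
        ≤ 2 * u p q' := by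
    intro a' ha' q' hq'
    rcases eq_or_lt_of_le hq' with h0 | hpos
    · -- q' = 0 : take the limit q ↓ 0
      rw [← h0]
      have hev : ∀ᶠ s in 𝓝[>] (0:ℝ),
          u (p + a') (Real.sqrt (a' ^ 2 + s ^ 2)) + u (p - a') (Real.sqrt (a' ^ 2 + s ^ 2))
            ≤ 2 * u p s := by
        filter_upwards [self_mem_nhdsWithin] with s hs
        exact BM_core u hsmooth hconv hpde p a' s ha' hs
      have hc : ∀ b : ℝ, ContinuousAt (fun s : ℝ => u b (Real.sqrt (a' ^ 2 + s ^ 2))) 0 := by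
        intro b
        have hpos0 : (0:ℝ) < a' ^ 2 + (0:ℝ) ^ 2 := by positivity
        have hr : 0 < Real.sqrt (a' ^ 2 + (0:ℝ) ^ 2) := Real.sqrt_pos.mpr hpos0
        have hmap : ContinuousAt (fun s : ℝ => ((b : ℝ), Real.sqrt (a' ^ 2 + s ^ 2))) 0 := by
          apply ContinuousAt.prodMk
          · exact continuousAt_const
          · exact (Real.continuous_sqrt.comp (by fun_prop)).continuousAt
        have hcomp : ContinuousAt ((fun z : ℝ × ℝ => u z.1 z.2)
            ∘ (fun s : ℝ => ((b : ℝ), Real.sqrt (a' ^ 2 + s ^ 2)))) 0 :=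
          ContinuousAt.comp (BM_contAt hsmooth hr) hmap
        exact hcomp
      have ht1 : Filter.Tendsto (fun s : ℝ =>
          u (p + a') (Real.sqrt (a' ^ 2 + s ^ 2)) + u (p - a') (Real.sqrt (a' ^ 2 + s ^ 2)))
          (𝓝[>] (0:ℝ))
          (𝓝 (u (p + a') (Real.sqrt (a' ^ 2 + (0:ℝ) ^ 2))
            + u (p - a') (Real.sqrt (a' ^ 2 + (0:ℝ) ^ 2)))) :=
        (((hc (p + a')).add (hc (p - a'))).tendsto).mono_left nhdsWithin_le_nhds
      have ht2 : Filter.Tendsto (fun s : ℝ => 2 * u p s) (𝓝[>] (0:ℝ)) (𝓝 (2 * u p 0)) := by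
        have hcw : ContinuousWithinAt (fun s : ℝ => u p s) (Ici 0) 0 := by
          have hcont := hsmooth.continuousOn
          have hmaps : MapsTo (fun s : ℝ => ((p : ℝ), s)) (Ici (0:ℝ)) (univ ×ˢ Ici 0) :=
            fun s hs => ⟨trivial, hs⟩
          exact (hcont.comp (Continuous.continuousOn (by fun_prop)) hmaps) 0 self_mem_Ici
        have h2 : Filter.Tendsto (fun s : ℝ => u p s) (𝓝[>] (0:ℝ)) (𝓝 (u p 0)) :=
          hcw.tendsto.mono_left (nhdsWithin_mono _ Ioi_subset_Ici_self)
        exact (tendsto_const_nhds.mul h2)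
      exact le_of_tendsto_of_tendsto ht1 ht2 hev
    · exact BM_core u hsmooth hconv hpde p a' q' ha' hpos
  rcases lt_trichotomy a 0 with hneg | hzero | hpos
  · have h := main (-a) (by linarith) q hq
    rw [ge_iff_le]
    have e1 : (-a) ^ 2 = a ^ 2 := by ring
    have e2 : p + -a = p - a := by ring
    have e3 : p - -a = p + a := by ring
    rw [e1, e2, e3] at h
    linarith
  · subst hzero
    rw [ge_iff_le]
    have e : Real.sqrt ((0:ℝ) ^ 2 + q ^ 2) = q := by
      rw [show (0:ℝ) ^ 2 + q ^ 2 = q ^ 2 by ring, Real.sqrt_sq hq]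
    rw [e, add_zero, sub_zero]
    linarith
  · exact (main a hpos q hq)
end
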